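/- (Lower sieve) Let l be a lace-map on the subsets of a finite set P, let X be a finite set, let A : X → (subsets of P), and let wt : X → ℝ be a nonnegative weight function. Suppose every unsaturated lace of l (i.e., every lace L with C(L) ≠ ∅) has even cardinality. Then N₀(X) = Σ_{x ∈ X, A(x) = ∅} wt(x) satisfies N₀(X) ≥ Σ_{L saturated lace} (−1)^{|L|} N(L), where the sum is over laces L with C(L) = ∅ and N(L) = Σ_{x ∈ X, L ⊆ A(x)} wt(x) is the total weight of elements having all the properties in L. -/

import Mathlib

/-!
Every `G ⊆ S` lies over the lace `l G ⊆ S`, and the fibre over a lace `L` is the interval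
`[L, L ∪ C_S(L)]`, where `C_S(L)` (`laceCWithin l S L`) collects the `p ∈ S \ L` with
`l (L ∪ {p}) = L`. Summing `(-1)^|G|` over `S.powerset` fibrewise, each fibre contributes
`(-1)^|L|` if `C_S(L) = ∅` and `0` otherwise, so `[S = ∅]` is the alternating sum over the laces
`L ⊆ S` with `C_S(L) = ∅`. These include all saturated laces in `S`; the others are unsaturated,
hence even, and contribute `+1`. So the alternating sum over saturated laces in `S` is at most
`[S = ∅]`; take `S = A x`, multiply by `wt x ≥ 0` and sum over `x`.
-/

/-- The set `C(L)` of properties compatible with a lace `L`. -/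
def laceC {α : Type*} [DecidableEq α] [Fintype α]
    (l : Finset α → Finset α) (L : Finset α) : Finset α :=
  (Finset.univ \ L).filter (fun p => l (insert p L) = L)

open Finset

section

variable {α : Type*} [DecidableEq α]

structure IsLaceMap (l : Finset α → Finset α) : Prop where
  map_subset : ∀ S, l S ⊆ S
  map_eq_of_subset_of_subset : ∀ S G, l S ⊆ G → G ⊆ S → l G = l S
  map_union_of_map_eq : ∀ S₁ S₂, l S₁ = l S₂ → l (S₁ ∪ S₂) = l S₁

def laceCWithin (l : Finset α → Finset α) (S L : Finset α) : Finset α :=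
  (S \ L).filter fun p => l (insert p L) = L

def saturatedLacesWithin (l : Finset α → Finset α) (S : Finset α) : Finset (Finset α) :=
  S.powerset.filter fun L => l L = L ∧ laceCWithin l S L = ∅

def saturatedLaces [Fintype α] (l : Finset α → Finset α) : Finset (Finset α) :=
  univ.filter fun L => l L = L ∧ laceC l L = ∅

theorem laceCWithin_subset_laceC [Fintype α] (l : Finset α → Finset α) (S L : Finset α) :
    laceCWithin l S L ⊆ laceC l L :=
  filter_subset_filter _ (sdiff_subset_sdiff (subset_univ S) subset_rfl)

theorem sum_powerset_neg_one_pow_card_eq_ite {R : Type*} [Ring R] (s : Finset α) :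
    ∑ t ∈ s.powerset, (-1 : R) ^ #t = if s = ∅ then 1 else 0 := by
  exact_mod_cast congrArg (Int.cast : ℤ → R) (sum_powerset_neg_one_pow_card (x := s))

theorem sum_powerset_neg_one_pow_card_union {R : Type*} [Ring R] {L C : Finset α}
    (h : Disjoint L C) :
    ∑ T ∈ C.powerset, (-1 : R) ^ #(L ∪ T) = if C = ∅ then (-1) ^ #L else 0 := by
  have hsplit : ∀ T ∈ C.powerset, (-1 : R) ^ #(L ∪ T) = (-1) ^ #L * (-1) ^ #T := fun T hT => by
    rw [card_union_of_disjoint (h.mono_right (mem_powerset.1 hT)), pow_add]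
  rw [sum_congr rfl hsplit, ← mul_sum, sum_powerset_neg_one_pow_card_eq_ite]
  split_ifs <;> simp

namespace IsLaceMap

variable {l : Finset α → Finset α}

theorem map_map (hl : IsLaceMap l) (S : Finset α) : l (l S) = l S :=
  hl.map_eq_of_subset_of_subset S (l S) subset_rfl (hl.map_subset S)

theorem map_union_eq (hl : IsLaceMap l) {L T : Finset α} (hL : l L = L)
    (hT : ∀ p ∈ T, l (insert p L) = L) : l (L ∪ T) = L := by
  induction T using Finset.induction_on with
  | empty => simpa using hL
  | insert p T _ ih =>
    have hp : l (insert p L) = L := hT p (mem_insert_self p T)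
    have hLT : l (L ∪ T) = L := ih fun q hq => hT q (mem_insert_of_mem hq)
    have hU : L ∪ insert p T = insert p L ∪ (L ∪ T) := by
      rw [insert_union, ← union_assoc, union_self, union_insert]
    rw [hU, hl.map_union_of_map_eq _ _ (hp.trans hLT.symm), hp]

theorem filter_powerset_map_eq (hl : IsLaceMap l) {S L : Finset α} (hLS : L ⊆ S) (hL : l L = L) :
    S.powerset.filter (fun G => l G = L) = (laceCWithin l S L).powerset.image (L ∪ ·) := by
  ext G
  simp only [mem_filter, mem_powerset, mem_image, laceCWithin, subset_iff, mem_sdiff]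
  constructor
  · rintro ⟨hGS, rfl⟩
    refine ⟨G \ l G, fun p hp => ?_, union_sdiff_of_subset (hl.map_subset G)⟩
    rw [mem_sdiff] at hp
    exact ⟨⟨hGS hp.1, hp.2⟩, hl.map_eq_of_subset_of_subset G _ (subset_insert _ _)
      (insert_subset hp.1 (hl.map_subset G))⟩
  · rintro ⟨T, hT, rfl⟩
    refine ⟨fun p hp => ?_, hl.map_union_eq hL fun p hp => (hT hp).2⟩
    rcases mem_union.1 hp with hp | hp
    exacts [hLS hp, (hT hp).1.1]

theorem sum_filter_map_eq_neg_one_pow_card {R : Type*} [Ring R] (hl : IsLaceMap l)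
    {S L : Finset α} (hLS : L ⊆ S) (hL : l L = L) :
    ∑ G ∈ S.powerset.filter (fun G => l G = L), (-1 : R) ^ #G =
      if laceCWithin l S L = ∅ then (-1) ^ #L else 0 := by
  have hdisj : Disjoint L (laceCWithin l S L) :=
    disjoint_left.2 fun p hpL hpC => (mem_sdiff.1 (mem_filter.1 hpC).1).2 hpL
  rw [hl.filter_powerset_map_eq hLS hL, sum_image, sum_powerset_neg_one_pow_card_union hdisj]
  intro T₁ hT₁ T₂ hT₂ hT
  rw [← union_sdiff_cancel_left (hdisj.mono_right (mem_powerset.1 hT₁)),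
    ← union_sdiff_cancel_left (hdisj.mono_right (mem_powerset.1 hT₂))]
  exact congrArg (· \ L) hT

theorem sum_saturatedLacesWithin_neg_one_pow_card {R : Type*} [Ring R] (hl : IsLaceMap l)
    (S : Finset α) :
    ∑ L ∈ saturatedLacesWithin l S, (-1 : R) ^ #L = if S = ∅ then 1 else 0 := by
  have hmaps : ∀ G ∈ S.powerset, l G ∈ S.powerset.filter (fun L => l L = L) := fun G hG =>
    mem_filter.2 ⟨mem_powerset.2 ((hl.map_subset G).trans (mem_powerset.1 hG)), hl.map_map G⟩
  rw [← sum_powerset_neg_one_pow_card_eq_ite, ← sum_fiberwise_of_maps_to hmaps,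
    saturatedLacesWithin, ← filter_filter, sum_filter]
  refine sum_congr rfl fun L hL => ?_
  obtain ⟨hLS, hL⟩ := mem_filter.1 hL
  exact (hl.sum_filter_map_eq_neg_one_pow_card (mem_powerset.1 hLS) hL).symm

theorem sum_saturatedLaces_neg_one_pow_card_le [Fintype α] {R : Type*} [Ring R] [PartialOrder R]
    [IsOrderedRing R] (hl : IsLaceMap l)
    (heven : ∀ L : Finset α, l L = L → laceC l L ≠ ∅ → Even #L) (S : Finset α) :
    ∑ L ∈ (saturatedLaces l).filter (· ⊆ S), (-1 : R) ^ #L ≤ if S = ∅ then 1 else 0 := by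
  rw [← hl.sum_saturatedLacesWithin_neg_one_pow_card S]
  apply sum_le_sum_of_subset_of_nonneg
  · intro L hL
    simp only [saturatedLaces, mem_filter, mem_univ, true_and] at hL
    obtain ⟨⟨hlace, hsat⟩, hLS⟩ := hL
    exact mem_filter.2 ⟨mem_powerset.2 hLS, hlace,
      subset_empty.1 (hsat ▸ laceCWithin_subset_laceC l S L)⟩
  · intro L hL hL'
    simp only [saturatedLacesWithin, mem_filter, mem_powerset] at hL
    simp only [saturatedLaces, mem_filter, mem_univ, true_and, not_and] at hL'
    obtain ⟨hLS, hlace, -⟩ := hL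
    rw [(heven L hlace fun hsat => hL' ⟨hlace, hsat⟩ hLS).neg_one_pow]
    exact zero_le_one

end IsLaceMap

end

/-- Lower sieve: if every unsaturated lace has even cardinality and
the weights are nonnegative, then
`N₀(X) ≥ Σ_{L saturated lace} (−1)^{|L|} N(L)`. -/
theorem lace_lower_sieve {α : Type*} [DecidableEq α] [Fintype α]
    (l : Finset α → Finset α)
    (h1 : ∀ S : Finset α, l S ⊆ S)
    (h2 : ∀ S G : Finset α, l S ⊆ G → G ⊆ S → l G = l S)
    (h3 : ∀ S₁ S₂ : Finset α, l S₁ = l S₂ → l (S₁ ∪ S₂) = l S₁)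
    (X : Type*) [Fintype X] (A : X → Finset α) (wt : X → ℝ)
    (hwt : ∀ x, 0 ≤ wt x)
    (heven : ∀ L : Finset α, l L = L → laceC l L ≠ ∅ → Even L.card) :
    ∑ x ∈ Finset.univ.filter (fun x : X => A x = ∅), wt x ≥
      ∑ L ∈ Finset.univ.filter (fun L : Finset α => l L = L ∧ laceC l L = ∅),
        (-1 : ℝ) ^ L.card *
          ∑ x ∈ Finset.univ.filter (fun x : X => L ⊆ A x), wt x := by
  have hl : IsLaceMap l := ⟨h1, h2, h3⟩
  rw [ge_iff_le]
  calc ∑ L ∈ saturatedLaces l, (-1 : ℝ) ^ #L * ∑ x ∈ univ.filter (fun x => L ⊆ A x), wt x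
      = ∑ x, (∑ L ∈ (saturatedLaces l).filter (· ⊆ A x), (-1 : ℝ) ^ #L) * wt x := by
        simp_rw [mul_sum, sum_mul]
        exact sum_comm' fun L x => by simp [and_comm]
    _ ≤ ∑ x, (if A x = ∅ then 1 else 0) * wt x := sum_le_sum fun x _ =>
        mul_le_mul_of_nonneg_right (hl.sum_saturatedLaces_neg_one_pow_card_le heven (A x)) (hwt x)
    _ = ∑ x ∈ univ.filter (fun x => A x = ∅), wt x := by simp [sum_filter]
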